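/- arXiv:2207.14188 — 3 statements merged into one kernel-verified Lean document; each statement's English description precedes it below -/
import Mathlib

section
/- For all integers r ≥ 0, m ≥ 2, and n ≥ 1, the following recurrence holds in ℚ: (m+r) · S_m^{(r)}(n) = m · (n + r/2) · S_{m-1}^{(r)}(n) − r · Σ_{k=1}^{m-2} C(m,k) · B_{m-k} · S_k^{(r)}(n), where B_j is the j-th Bernoulli number (with B_1 = −1/2) and the sum is empty when m = 2. -/
/-!
Faulhaber's formula, in the form
`m ∑_{i=1}^n i^(m-1) = n^m + (m/2) n^(m-1) + ∑_{k=1}^{m-2} C(m,k) B_{m-k} n^k`,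
is linear in the powers `n^k`; summing it over `n` therefore lifts it to every level:
`m S_{m-1}^{(r+1)} = S_m^{(r)} + (m/2) S_{m-1}^{(r)} + ∑ C(m,k) B_{m-k} S_k^{(r)}`.
The recurrence is then proved by induction on `r` and, for `r ≥ 1`, on `n`: both sides vanish
at `n = 0`, and their increments from `n` to `n + 1` agree by the recurrence at level `r` and
the lifted Faulhaber identity.
-/

/-- Hyper-sum of powers of integers: `S m 0 n = n^m` and
`S m (r+1) n = ∑ i in [1..n], S m r i`. -/
def S (m : ℕ) : ℕ → ℕ → ℚ
  | 0, n => (n : ℚ) ^ m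
  | r + 1, n => ∑ i ∈ Finset.Icc 1 n, S m r i

open Finset

theorem mul_sum_Icc_pow_pred {m : ℕ} (hm : 2 ≤ m) (n : ℕ) :
    (m : ℚ) * ∑ i ∈ Icc 1 n, (i : ℚ) ^ (m - 1)
      = (n : ℚ) ^ m + m / 2 * (n : ℚ) ^ (m - 1)
        + ∑ k ∈ Icc 1 (m - 2), (m.choose k : ℚ) * bernoulli (m - k) * (n : ℚ) ^ k := by
  obtain ⟨p, rfl⟩ := Nat.exists_eq_add_of_le' hm
  have hreflect : ∑ k ∈ Icc 1 p, ((p + 2).choose k : ℚ) * bernoulli (p + 2 - k) * (n : ℚ) ^ k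
      = ∑ i ∈ range p, bernoulli' (i + 2) * ((p + 2).choose (i + 2) : ℚ) * (n : ℚ) ^ (p - i) := by
    refine sum_nbij' (fun k => p - k) (fun i => p - i) ?_ ?_ ?_ ?_ ?_ <;>
      simp only [mem_Icc, mem_range] <;> intro a ha
    · omega
    · omega
    · omega
    · omega
    · rw [show p - a + 2 = p + 2 - a by omega, show p - (p - a) = a by omega,
        Nat.choose_symm (by omega), bernoulli_eq_bernoulli'_of_ne_one (by omega)]
      ring
  have hp : (p : ℚ) + 1 + 1 ≠ 0 := by positivity
  rw [show p + 2 - 1 = p + 1 by omega, Nat.add_sub_cancel, hreflect,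
    ← Ico_add_one_right_eq_Icc, sum_Ico_pow, mul_sum]
  push_cast
  rw [show (p : ℚ) + 2 = p + 1 + 1 by ring]
  simp only [mul_div_cancel₀ _ hp]
  rw [sum_range_succ', sum_range_succ']
  simp only [zero_add, bernoulli'_zero, bernoulli'_one, Nat.choose_zero_right, Nat.choose_one_right]
  push_cast
  ring

theorem S_succ (m r n : ℕ) : S m (r + 1) n = ∑ i ∈ Icc 1 n, S m r i := rfl

theorem S_succ_zero (m r : ℕ) : S m (r + 1) 0 = 0 := rfl

theorem S_succ_succ (m r n : ℕ) : S m (r + 1) (n + 1) = S m (r + 1) n + S m r (n + 1) :=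
  sum_Icc_succ_top (Nat.le_add_left 1 n) _

theorem mul_S_pred_succ {m : ℕ} (hm : 2 ≤ m) (r n : ℕ) :
    (m : ℚ) * S (m - 1) (r + 1) n
      = S m r n + m / 2 * S (m - 1) r n
        + ∑ k ∈ Icc 1 (m - 2), (m.choose k : ℚ) * bernoulli (m - k) * S k r n := by
  induction r generalizing n with
  | zero => exact mul_sum_Icc_pow_pred hm n
  | succ r ih =>
    calc (m : ℚ) * S (m - 1) (r + 2) n = ∑ i ∈ Icc 1 n, (m : ℚ) * S (m - 1) (r + 1) i :=
          mul_sum _ _ _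
      _ = ∑ i ∈ Icc 1 n, (S m r i + m / 2 * S (m - 1) r i
            + ∑ k ∈ Icc 1 (m - 2), (m.choose k : ℚ) * bernoulli (m - k) * S k r i) :=
          sum_congr rfl fun i _ => ih i
      _ = _ := by
          simp only [S_succ, sum_add_distrib, mul_sum]
          exact congrArg _ sum_comm

theorem stmt_5_general (m r n : ℕ) (hm : 2 ≤ m) :
    ((m : ℚ) + r) * S m r n
      = (m : ℚ) * ((n : ℚ) + r / 2) * S (m - 1) r n
        - (r : ℚ) * ∑ k ∈ Finset.Icc 1 (m - 2),
            (m.choose k : ℚ) * bernoulli (m - k) * S k r n := by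
  induction r generalizing n with
  | zero =>
    obtain ⟨p, rfl⟩ := Nat.exists_eq_add_of_le' hm
    simp only [S, Nat.add_sub_cancel, pow_succ]
    push_cast
    ring
  | succ r ih =>
    induction n with
    | zero => simp only [S_succ_zero, mul_zero, sum_const_zero, sub_zero]
    | succ n ihn =>
      have hprev := ih (n + 1)
      have hstep := mul_S_pred_succ hm r (n + 1)
      simp only [S_succ_succ, mul_add, sum_add_distrib] at hstep ⊢
      push_cast at ihn hprev hstep ⊢
      linear_combination ihn + hprev - hstep

theorem stmt_5 (m r n : ℕ) (hm : 2 ≤ m) (hn : 1 ≤ n) :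
    ((m : ℚ) + r) * S m r n
      = (m : ℚ) * ((n : ℚ) + r / 2) * S (m - 1) r n
        - (r : ℚ) * ∑ k ∈ Finset.Icc 1 (m - 2),
            (m.choose k : ℚ) * bernoulli (m - k) * S k r n :=
  stmt_5_general m r n hm
end

section
/- For all positive integers r, m, there exist polynomials F_{2m-1} and F_{2m} in one variable of degree m−1 with rational coefficients such that for all n ≥ 1, S_{2m-1}^{(r)}(n) = S_1^{(r)}(n) · F_{2m-1}(n(n+r)) and S_{2m}^{(r)}(n) = S_2^{(r)}(n) · F_{2m}(n(n+r)). -/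
open Polynomial Finset

theorem Polynomial.natDegree_X_mul_X_add_C {K : Type*} [Field K] (c : K) :
    (X * (X + C c)).natDegree = 2 := by
  rw [natDegree_mul X_ne_zero (X_add_C_ne_zero c), natDegree_X, natDegree_X_add_C]

section Reflection

variable {K : Type*} [Field K] [CharZero K] (c : K)

theorem Polynomial.exists_eq_comp_X_mul_X_add_C {G : K[X]} (hG : G.comp (-(X + C c)) = G) :
    ∃ F : K[X], G = F.comp (X * (X + C c)) := by
  set u : K[X] := X * (X + C c)
  have hu : u.Monic := monic_X.mul (monic_X_add_C c)
  have hu_deg : u.natDegree = 2 := natDegree_X_mul_X_add_C c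
  have hu_comp : u.comp (-(X + C c)) = u := by
    simp only [u, mul_comp, add_comp, X_comp, C_comp]; ring
  -- Quotient and remainder by the invariant monic `u` are invariant, by uniqueness of division.
  induction hn : G.natDegree using Nat.strong_induction_on generalizing G with
  | _ n ih =>
  set q := G /ₘ u
  set ρ := G %ₘ u
  have hρ_deg : ρ.natDegree ≤ 1 := by
    have : ρ.natDegree < u.natDegree :=
      natDegree_modByMonic_lt G hu (by rintro h; simp [h] at hu_deg)
    omega
  obtain ⟨hq, hρ⟩ : q = q.comp (-(X + C c)) ∧ ρ = ρ.comp (-(X + C c)) := by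
    refine div_modByMonic_unique _ _ hu ⟨?_, ?_⟩
    · conv_rhs => rw [← hG, ← modByMonic_add_div G u]
      rw [add_comp, mul_comp, hu_comp]
    · rw [degree_eq_natDegree hu.ne_zero, hu_deg]
      refine (degree_le_of_natDegree_le (n := 1) ?_).trans_lt (by norm_num)
      rw [natDegree_comp, natDegree_neg, natDegree_X_add_C, mul_one]
      exact hρ_deg
  have hρ_C : ρ = C (ρ.coeff 0) := by
    have hlin := eq_X_add_C_of_natDegree_le_one hρ_deg
    have ha : ρ.coeff 1 = 0 := by
      have h1 := congrArg (coeff · 1) hρ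
      rw [hlin] at h1
      exact self_eq_neg.mp (by simpa using h1)
    conv_lhs => rw [hlin, ha]
    simp
  obtain ⟨F, hF⟩ : ∃ F : K[X], q = F.comp u := by
    by_cases hq0 : q = 0
    · exact ⟨0, by rw [hq0, zero_comp]⟩
    have hn2 : 2 ≤ n := by
      by_contra! h
      exact hq0 ((divByMonic_eq_zero_iff hu).2 (by
        rw [degree_eq_natDegree hu.ne_zero, hu_deg]
        exact (degree_le_of_natDegree_le (n := 1) (by omega)).trans_lt (by norm_num)))
    exact ih _ (by rw [natDegree_divByMonic G hu, hn, hu_deg]; omega) hq.symm rfl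
  refine ⟨C (ρ.coeff 0) + X * F, ?_⟩
  rw [add_comp, mul_comp, X_comp, C_comp, ← hF, ← hρ_C]
  exact (modByMonic_add_div G u).symm

theorem Polynomial.exists_eq_mul_comp_X_mul_X_add_C {G : K[X]} (hG : G.comp (-(X + C c)) = -G) :
    ∃ F : K[X], G = (X + C (c / 2)) * F.comp (X * (X + C c)) := by
  have hc : C c = C (c / 2) + C (c / 2) := by rw [← C_add, add_halves]
  have hroot : G.IsRoot (-(c / 2)) := by
    have h := congrArg (eval (-(c / 2))) hG
    simp only [eval_comp, eval_neg, eval_add, eval_X, eval_C] at h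
    rw [show -(-(c / 2) + c) = -(c / 2) by ring] at h
    exact self_eq_neg.mp h
  obtain ⟨H, hGH⟩ : X + C (c / 2) ∣ G := by
    simpa only [C_neg, sub_neg_eq_add] using dvd_iff_isRoot.mpr hroot
  have hH : H.comp (-(X + C c)) = H := by
    refine mul_left_cancel₀ (X_add_C_ne_zero (c / 2)) (neg_injective ?_)
    rw [← hGH, ← hG, hGH, mul_comp, add_comp, X_comp, C_comp, hc]
    ring
  obtain ⟨F, hF⟩ := exists_eq_comp_X_mul_X_add_C c hH
  exact ⟨F, hF ▸ hGH⟩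

end Reflection

theorem ascPochhammer_succ_eval_neg_add {R : Type*} [CommRing R] (n : ℕ) (x : R) :
    (ascPochhammer R (n + 1)).eval (-(x + n)) =
      (-1) ^ (n + 1) * (ascPochhammer R (n + 1)).eval x := by
  rw [ascPochhammer_eval_neg_eq_descPochhammer, descPochhammer_eval_eq_ascPochhammer]
  congr 2
  push_cast
  ring

theorem ascPochhammer_dvd_of_eval_neg_natCast {K : Type*} [Field K] [CharZero K] {P : K[X]}
    {k : ℕ} (h : ∀ j < k, P.eval (-(j : K)) = 0) : ascPochhammer K k ∣ P := by
  induction k with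
  | zero => simp
  | succ k ih =>
    obtain ⟨Q, rfl⟩ := ih fun j hj => h j (by omega)
    have hk : (ascPochhammer K k).eval (-(k : K)) ≠ 0 := by
      rw [ne_eq, ascPochhammer_eval_eq_zero_iff]
      rintro ⟨j, hj, hjk⟩
      rw [neg_neg, Nat.cast_inj] at hjk
      omega
    have hQ : Q.IsRoot (-(k : K)) := by
      have := h k (by omega)
      rw [eval_mul] at this
      exact (mul_eq_zero.mp this).resolve_left hk
    rw [ascPochhammer_succ_right]
    refine mul_dvd_mul_left _ ?_
    simpa [sub_neg_eq_add] using dvd_iff_isRoot.mpr hQ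

theorem Polynomial.eq_of_forall_eval_natCast {R : Type*} [CommRing R] [IsDomain R] [CharZero R]
    {P Q : R[X]} (h : ∀ n : ℕ, P.eval (n : R) = Q.eval (n : R)) : P = Q :=
  eq_of_infinite_eval_eq P Q <| (Set.infinite_range_of_injective Nat.cast_injective).mono <| by
    rintro _ ⟨n, rfl⟩
    exact h n

theorem Polynomial.eq_of_eval_add_one_sub_eq {R : Type*} [CommRing R] [IsDomain R] [CharZero R]
    {P Q : R[X]} (h : ∀ x, P.eval (x + 1) - P.eval x = Q.eval (x + 1) - Q.eval x)
    (h0 : P.eval 0 = Q.eval 0) : P = Q := by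
  refine eq_of_forall_eval_natCast fun n => ?_
  induction n with
  | zero => simpa using h0
  | succ n ih =>
    push_cast
    linear_combination h n + ih

theorem Polynomial.natDegree_taylor_sub_lt {R : Type*} [CommRing R] {c : R} {P : R[X]}
    (h : taylor c P - P ≠ 0) : (taylor c P - P).natDegree < P.natDegree := by
  have hP : taylor c P ≠ 0 := by
    rintro h'
    rw [taylor_eq_zero] at h'
    simp [h'] at h
  have hlt := natDegree_lt_natDegree h <|
    degree_sub_lt_left (degree_taylor P c) hP (leadingCoeff_taylor c P)
  rwa [natDegree_taylor] at hlt

theorem Polynomial.natDegree_bernoulli_le (n : ℕ) : (Polynomial.bernoulli n).natDegree ≤ n := by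
  rw [Polynomial.bernoulli]
  exact natDegree_sum_le_of_forall_le _ _ fun i _ =>
    (natDegree_monomial_le _).trans (Nat.sub_le _ _)

noncomputable def powSumPoly (p : ℕ) : ℚ[X] :=
  C (p + 1 : ℚ)⁻¹ * (Polynomial.bernoulli (p + 1) - C (_root_.bernoulli (p + 1)))

theorem eval_powSumPoly (p n : ℕ) :
    (powSumPoly p).eval (n : ℚ) = ∑ k ∈ range n, (k : ℚ) ^ p := by
  rw [powSumPoly, eval_mul, eval_C, eval_sub, eval_C, ← sum_range_pow_eq_bernoulli_sub,
    inv_mul_cancel_left₀ (by positivity)]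

theorem natDegree_powSumPoly_le (p : ℕ) : (powSumPoly p).natDegree ≤ p + 1 :=
  (natDegree_C_mul_le _ _).trans <| (natDegree_sub_le _ _).trans <|
    max_le (natDegree_bernoulli_le _) (by simp)

noncomputable def rangeSumPoly (P : ℚ[X]) : ℚ[X] :=
  ∑ i ∈ range (P.natDegree + 1), C (P.coeff i) * powSumPoly i

theorem eval_rangeSumPoly (P : ℚ[X]) (n : ℕ) :
    (rangeSumPoly P).eval (n : ℚ) = ∑ k ∈ range n, P.eval (k : ℚ) := by
  rw [rangeSumPoly, eval_finsetSum]
  simp only [eval_C_mul, eval_powSumPoly, mul_sum]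
  rw [sum_comm]
  exact sum_congr rfl fun k _ => (eval_eq_sum_range _).symm

theorem natDegree_rangeSumPoly_le (P : ℚ[X]) : (rangeSumPoly P).natDegree ≤ P.natDegree + 1 :=
  natDegree_sum_le_of_forall_le _ _ fun i hi =>
    (natDegree_C_mul_le _ _).trans <| (natDegree_powSumPoly_le i).trans <| by
      simpa [Nat.lt_succ_iff] using hi

theorem taylor_rangeSumPoly (P : ℚ[X]) : taylor 1 (rangeSumPoly P) = rangeSumPoly P + P := by
  refine eq_of_forall_eval_natCast fun n => ?_
  rw [taylor_eval, eval_add, ← Nat.cast_succ, eval_rangeSumPoly, eval_rangeSumPoly,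
    sum_range_succ]

noncomputable def hyperSumPoly (m : ℕ) : ℕ → ℚ[X]
  | 0 => X ^ m
  | r + 1 => rangeSumPoly (taylor 1 (hyperSumPoly m r))

namespace hyperSumPoly

variable (m : ℕ)

theorem eval_natCast (r n : ℕ) : (hyperSumPoly m r).eval (n : ℚ) = S m r n := by
  induction r generalizing n with
  | zero => simp [hyperSumPoly, S]
  | succ r ih =>
    have hIcc : ∑ i ∈ Icc 1 n, S m r i = ∑ k ∈ range n, S m r (k + 1) := by
      rw [range_eq_Ico, sum_Ico_add', zero_add, Ico_add_one_right_eq_Icc]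
    rw [hyperSumPoly, eval_rangeSumPoly, S, hIcc]
    refine sum_congr rfl fun k _ => ?_
    rw [taylor_eval, ← Nat.cast_succ, ih]

theorem taylor_succ (r : ℕ) :
    taylor 1 (hyperSumPoly m (r + 1)) = hyperSumPoly m (r + 1) + taylor 1 (hyperSumPoly m r) :=
  taylor_rangeSumPoly _

theorem eval_succ_add_one (r : ℕ) (x : ℚ) :
    (hyperSumPoly m (r + 1)).eval (x + 1) =
      (hyperSumPoly m (r + 1)).eval x + (hyperSumPoly m r).eval (x + 1) := by
  simpa only [taylor_eval, eval_add] using congrArg (eval x) (taylor_succ m r)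

theorem eval_succ_zero (r : ℕ) : (hyperSumPoly m (r + 1)).eval 0 = 0 := by
  rw [hyperSumPoly]
  simpa using eval_rangeSumPoly (taylor 1 (hyperSumPoly m r)) 0

theorem ne_zero (r : ℕ) : hyperSumPoly m r ≠ 0 := by
  induction r with
  | zero => exact pow_ne_zero m X_ne_zero
  | succ r ih =>
    intro h
    have h' := taylor_succ m r
    rw [h, map_zero, zero_add, eq_comm, taylor_eq_zero] at h'
    exact ih h'

theorem natDegree_eq (r : ℕ) : (hyperSumPoly m r).natDegree = m + r := by
  induction r with
  | zero => simp [hyperSumPoly]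
  | succ r ih =>
    have hle : (hyperSumPoly m (r + 1)).natDegree ≤ m + r + 1 := by
      rw [hyperSumPoly, ← ih, ← natDegree_taylor (hyperSumPoly m r) 1]
      exact natDegree_rangeSumPoly_le _
    have hΔ : taylor 1 (hyperSumPoly m (r + 1)) - hyperSumPoly m (r + 1) =
        taylor 1 (hyperSumPoly m r) := by
      rw [taylor_succ, add_sub_cancel_left]
    have hgt : m + r < (hyperSumPoly m (r + 1)).natDegree := by
      have h := natDegree_taylor_sub_lt (c := 1) (P := hyperSumPoly m (r + 1))
        (by rw [hΔ, Ne, taylor_eq_zero]; exact ne_zero m r)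
      rwa [hΔ, natDegree_taylor, ih] at h
    omega

theorem eval_neg_natCast (hm : m ≠ 0) {r j : ℕ} (hj : j ≤ r) :
    (hyperSumPoly m r).eval (-(j : ℚ)) = 0 := by
  induction r generalizing j with
  | zero => simp [hyperSumPoly, Nat.le_zero.mp hj, hm]
  | succ r ih =>
    induction j with
    | zero => simpa using eval_succ_zero m r
    | succ j ihj =>
      have h := eval_succ_add_one m r (-(j + 1 : ℕ))
      push_cast at h ⊢
      rw [show -((j : ℚ) + 1) + 1 = -j by ring, ihj (by omega), ih (by omega)] at h
      linear_combination -h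

theorem eval_neg_add (hm : m ≠ 0) (r : ℕ) (x : ℚ) :
    (hyperSumPoly m r).eval (-(x + r)) = (-1) ^ (m + r) * (hyperSumPoly m r).eval x := by
  induction r generalizing x with
  | zero =>
    simp only [hyperSumPoly, eval_pow, eval_X, Nat.cast_zero, add_zero]
    exact neg_pow x m
  | succ r ih =>
    set ε : ℚ := (-1) ^ (m + (r + 1))
    have hε : ε * (-1) ^ (m + r) = -1 := by
      rw [← pow_add]; exact Odd.neg_one_pow ⟨m + r, by ring⟩
    have key : hyperSumPoly m (r + 1) =
        C ε * (hyperSumPoly m (r + 1)).comp (-(X + C ((r : ℚ) + 1))) := by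
      -- Both sides vanish at `0` and have forward difference `y ↦ (hyperSumPoly m r).eval (y + 1)`.
      refine eq_of_eval_add_one_sub_eq (fun y => ?_) ?_
      · have h₀ := eval_succ_add_one m r y
        have h₁ := eval_succ_add_one m r (-(y + r + 2))
        rw [show -(y + r + 2) + 1 = -(y + 1 + r) by ring] at h₁
        simp only [eval_mul, eval_C, eval_comp, eval_neg, eval_add, eval_X]
        rw [show -(y + 1 + (r + 1)) = -(y + r + 2) by ring,
          show -(y + (r + 1)) = -(y + 1 + r) by ring]
        linear_combination
          h₀ + ε * h₁ + ε * ih (y + 1) + (hyperSumPoly m r).eval (y + 1) * hε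
      · have h := eval_neg_natCast m hm (le_refl (r + 1))
        push_cast at h
        simp only [eval_mul, eval_C, eval_comp, eval_neg, eval_add, eval_X, zero_add, h,
          mul_zero, eval_succ_zero]
    conv_lhs => rw [key]
    simp only [eval_mul, eval_C, eval_comp, eval_neg, eval_add, eval_X]
    push_cast
    rw [show -(-(x + (r + 1)) + (r + 1)) = x by ring]

theorem exists_eq_ascPochhammer_mul (hm : m ≠ 0) (r : ℕ) :
    ∃ G : ℚ[X], hyperSumPoly m r = ascPochhammer ℚ (r + 1) * G ∧ G.natDegree = m - 1 ∧
      G.comp (-(X + C (r : ℚ))) = C ((-1) ^ (m + 1)) * G := by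
  obtain ⟨G, hG⟩ := ascPochhammer_dvd_of_eval_neg_natCast (k := r + 1) fun j hj =>
    eval_neg_natCast m hm (Nat.lt_succ_iff.mp hj)
  have hA : ascPochhammer ℚ (r + 1) ≠ 0 := (monic_ascPochhammer ℚ (r + 1)).ne_zero
  have hG0 : G ≠ 0 := by
    rintro rfl
    exact ne_zero m r (by rw [hG, mul_zero])
  refine ⟨G, hG, ?_, ?_⟩
  · have h := natDegree_eq m r
    rw [hG, natDegree_mul hA hG0, ascPochhammer_natDegree] at h
    omega
  · refine mul_left_cancel₀ hA (Polynomial.funext fun x => ?_)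
    have h := eval_neg_add m hm r x
    rw [hG, eval_mul, eval_mul, ascPochhammer_succ_eval_neg_add] at h
    have ht : ((-1 : ℚ) ^ (r + 1)) ^ 2 = 1 := by
      rw [← pow_mul]; exact Even.neg_one_pow ⟨r + 1, by ring⟩
    have hts : (-1 : ℚ) ^ (r + 1) * (-1) ^ (m + r) = (-1) ^ (m + 1) := by
      rw [← pow_add, show r + 1 + (m + r) = m + 1 + 2 * r by ring, pow_add, pow_mul]
      norm_num
    simp only [eval_mul, eval_comp, eval_neg, eval_add, eval_X, eval_C]
    linear_combination (-1 : ℚ) ^ (r + 1) * h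
      - (ascPochhammer ℚ (r + 1)).eval x * G.eval (-(x + r)) * ht
      + (ascPochhammer ℚ (r + 1)).eval x * G.eval x * hts

theorem exists_odd_eq_ascPochhammer_mul_comp (hm : m ≠ 0) (r : ℕ) :
    ∃ F : ℚ[X], F.natDegree = m - 1 ∧
      hyperSumPoly (2 * m - 1) r = ascPochhammer ℚ (r + 1) * F.comp (X * (X + C (r : ℚ))) := by
  obtain ⟨G, hP, hdeg, hsymm⟩ := exists_eq_ascPochhammer_mul (2 * m - 1) (by omega) r
  rw [show 2 * m - 1 + 1 = 2 * m by omega, pow_mul, neg_one_sq, one_pow, C_1, one_mul] at hsymm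
  obtain ⟨F, rfl⟩ := exists_eq_comp_X_mul_X_add_C _ hsymm
  refine ⟨F, ?_, hP⟩
  rw [natDegree_comp, natDegree_X_mul_X_add_C] at hdeg
  omega

theorem exists_even_eq_ascPochhammer_mul_comp (hm : m ≠ 0) (r : ℕ) :
    ∃ F : ℚ[X], F.natDegree = m - 1 ∧ hyperSumPoly (2 * m) r =
      ascPochhammer ℚ (r + 1) * (X + C ((r : ℚ) / 2)) * F.comp (X * (X + C (r : ℚ))) := by
  obtain ⟨G, hP, hdeg, hsymm⟩ := exists_eq_ascPochhammer_mul (2 * m) (by omega) r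
  rw [pow_succ, pow_mul, neg_one_sq, one_pow, one_mul, C_neg, C_1, neg_one_mul] at hsymm
  obtain ⟨F, rfl⟩ := exists_eq_mul_comp_X_mul_X_add_C _ hsymm
  refine ⟨F, ?_, by rw [hP, mul_assoc]⟩
  have hF : F.comp (X * (X + C (r : ℚ))) ≠ 0 := by
    rintro h
    rw [h, mul_zero, natDegree_zero] at hdeg
    omega
  rw [natDegree_mul (X_add_C_ne_zero _) hF, natDegree_X_add_C, natDegree_comp,
    natDegree_X_mul_X_add_C] at hdeg
  omega

end hyperSumPoly

theorem Polynomial.exists_eq_mul_comp_of_natDegree_eq_zero {K : Type*} [Field K]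
    {B P Q F G u : K[X]}
    (hP : P = B * F.comp u) (hQ : Q = B * G.comp u) (hG : G.natDegree = 0) (hQ0 : Q ≠ 0) :
    ∃ F' : K[X], F'.natDegree = F.natDegree ∧ P = Q * F'.comp u := by
  rw [eq_C_of_natDegree_eq_zero hG, C_comp] at hQ
  have ha : G.coeff 0 ≠ 0 := by
    rintro h
    rw [h, C_0, mul_zero] at hQ
    exact hQ0 hQ
  refine ⟨C (G.coeff 0)⁻¹ * F, natDegree_C_mul (inv_ne_zero ha), ?_⟩
  rw [hP, hQ, mul_comp, C_comp, mul_assoc, ← mul_assoc (C _), ← C_mul, mul_inv_cancel₀ ha,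
    C_1, one_mul]

theorem stmt_10_general (r m : ℕ) (hm : 1 ≤ m) :
    ∃ F₁ F₂ : Polynomial ℚ, F₁.natDegree = m - 1 ∧ F₂.natDegree = m - 1 ∧
      ∀ n : ℕ, 1 ≤ n →
        S (2 * m - 1) r n = S 1 r n * F₁.eval ((n : ℚ) * ((n : ℚ) + r)) ∧
        S (2 * m) r n = S 2 r n * F₂.eval ((n : ℚ) * ((n : ℚ) + r)) := by
  obtain ⟨Fo, hFo, hPo⟩ := hyperSumPoly.exists_odd_eq_ascPochhammer_mul_comp m (by omega) r
  obtain ⟨Fe, hFe, hPe⟩ := hyperSumPoly.exists_even_eq_ascPochhammer_mul_comp m (by omega) r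
  obtain ⟨G₁, hG₁, hP₁⟩ := hyperSumPoly.exists_odd_eq_ascPochhammer_mul_comp 1 one_ne_zero r
  obtain ⟨G₂, hG₂, hP₂⟩ := hyperSumPoly.exists_even_eq_ascPochhammer_mul_comp 1 one_ne_zero r
  obtain ⟨F₁, hF₁, h₁⟩ :=
    exists_eq_mul_comp_of_natDegree_eq_zero hPo hP₁ hG₁ (hyperSumPoly.ne_zero _ _)
  obtain ⟨F₂, hF₂, h₂⟩ :=
    exists_eq_mul_comp_of_natDegree_eq_zero hPe hP₂ hG₂ (hyperSumPoly.ne_zero _ _)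
  refine ⟨F₁, F₂, hF₁.trans hFo, hF₂.trans hFe, fun n _ => ?_⟩
  simp only [← hyperSumPoly.eval_natCast, h₁, h₂, eval_mul, eval_comp, eval_add, eval_X,
    eval_C, and_self]

theorem stmt_10 (r m : ℕ) (hr : 1 ≤ r) (hm : 1 ≤ m) :
    ∃ F₁ F₂ : Polynomial ℚ, F₁.natDegree = m - 1 ∧ F₂.natDegree = m - 1 ∧
      ∀ n : ℕ, 1 ≤ n →
        S (2 * m - 1) r n = S 1 r n * F₁.eval ((n : ℚ) * ((n : ℚ) + r)) ∧
        S (2 * m) r n = S 2 r n * F₂.eval ((n : ℚ) * ((n : ℚ) + r)) :=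
  stmt_10_general r m hm
end

section
/- For every positive integer m, the power sum S_m(n) = 1^m + ... + n^m can be written as an even or odd polynomial in N = n + 1/2 according to the parity of m: there exist rational numbers f_{m,j} such that S_{2m-1}(n) = Σ_{j=0}^{m} f_{2m-1,j} · (n + 1/2)^{2j} and S_{2m}(n) = Σ_{j=0}^{m} f_{2m,j} · (n + 1/2)^{2j+1}, for all n ≥ 1. -/
/-!
Faulhaber's formula `(p + 1) S_p(n) = B_{p+1}(n + 1) - B_{p+1}` expresses `S_p(n)` as a polynomial
in `N = n + 1/2`, namely `(B_{p+1}(N + 1/2) - B_{p+1}) / (p + 1)`. The reflection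
`B_k(1 - x) = (-1)^k B_k(x)` makes `x ↦ B_{p+1}(x + 1/2)` even or odd according to the parity of
`p + 1`, and the constant `B_{p+1}` does not spoil this since it vanishes for odd `p + 1 > 1`.
So only every other coefficient of this polynomial in `N` survives.
-/

open Polynomial Finset

theorem Finset.sum_range_two_mul {M : Type*} [AddCommMonoid M] (f : ℕ → M) (m : ℕ) :
    ∑ i ∈ range (2 * m), f i = ∑ j ∈ range m, (f (2 * j) + f (2 * j + 1)) := by
  induction m with
  | zero => simp
  | succ m ih =>
    rw [mul_add, mul_one, sum_range_succ, sum_range_succ, sum_range_succ, ih, add_assoc]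

namespace Polynomial

variable {R : Type*} [CommRing R]

lemma coeff_comp_neg_X (P : R[X]) (i : ℕ) : (P.comp (-X)).coeff i = (-1) ^ i * P.coeff i := by
  rw [← neg_one_mul (X : R[X]), ← C_1, ← C_neg, comp_C_mul_X_coeff, mul_comm]

lemma coeff_eq_zero_of_comp_neg_X_eq_smul [NoZeroDivisors R] [CharZero R] {P : R[X]} {e i : ℕ}
    (hP : P.comp (-X) = (-1 : R) ^ e • P) (hi : Odd (i + e)) : P.coeff i = 0 := by
  have h := congrArg (coeff · i) hP
  simp only [coeff_comp_neg_X, coeff_smul, smul_eq_mul] at h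
  have : P.coeff i = -P.coeff i := by
    calc P.coeff i = (-1) ^ i * ((-1) ^ i * P.coeff i) := by
          rw [← mul_assoc, ← pow_add, ← two_mul, pow_mul]; simp
      _ = -P.coeff i := by rw [h, ← mul_assoc, ← pow_add, hi.neg_one_pow, neg_one_mul]
  exact CharZero.eq_neg_self_iff.mp this

lemma eval_eq_sum_range_even_add_odd {P : R[X]} {m : ℕ} (hP : P.natDegree < 2 * m) (x : R) :
    P.eval x = ∑ j ∈ range m,
      (P.coeff (2 * j) * x ^ (2 * j) + P.coeff (2 * j + 1) * x ^ (2 * j + 1)) := by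
  rw [eval_eq_sum_range' hP, sum_range_two_mul]

noncomputable def powerSumPoly (p : ℕ) : ℚ[X] :=
  C ((p + 1 : ℚ)⁻¹) * ((bernoulli (p + 1)).comp (X + C 2⁻¹) - C (_root_.bernoulli (p + 1)))

lemma natDegree_bernoulli_le_s17 (n : ℕ) : (bernoulli n).natDegree ≤ n :=
  natDegree_le_iff_coeff_eq_zero.mpr fun i hi => by
    rw [coeff_bernoulli, if_neg (by exact_mod_cast hi.not_ge)]

lemma natDegree_powerSumPoly_le (p : ℕ) : (powerSumPoly p).natDegree ≤ p + 1 := by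
  unfold powerSumPoly
  refine (natDegree_C_mul_le _ _).trans <| (natDegree_sub_le _ _).trans <| max_le ?_ (by simp)
  rw [natDegree_comp, natDegree_X_add_C, mul_one]
  exact natDegree_bernoulli_le_s17 _

lemma powerSumPoly_eval {p : ℕ} (hp : p ≠ 0) (n : ℕ) :
    (powerSumPoly p).eval ((n : ℚ) + 1 / 2) = ∑ k ∈ Icc 1 n, (k : ℚ) ^ p := by
  have hsum : ∑ k ∈ range (n + 1), (k : ℚ) ^ p = ∑ k ∈ Icc 1 n, (k : ℚ) ^ p := by
    rw [range_eq_Ico, sum_eq_sum_Ico_succ_bot n.succ_pos, Nat.succ_eq_add_one,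
      Ico_add_one_right_eq_Icc]
    simp [hp]
  have h := sum_range_pow_eq_bernoulli_sub (n + 1) p
  rw [hsum, Nat.succ_eq_add_one, Nat.cast_add_one] at h
  simp only [powerSumPoly, eval_mul, eval_sub, eval_comp, eval_add, eval_X, eval_C]
  rw [show (n : ℚ) + 1 / 2 + 2⁻¹ = n + 1 by ring, ← h]
  field_simp

lemma powerSumPoly_comp_neg_X {p : ℕ} (hp : p ≠ 0) :
    (powerSumPoly p).comp (-X) = (-1 : ℚ) ^ (p + 1) • powerSumPoly p := by
  have hb : _root_.bernoulli (p + 1) = (-1) ^ (p + 1) * _root_.bernoulli (p + 1) := by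
    rw [← bernoulli'_eq_bernoulli, bernoulli_eq_bernoulli'_of_ne_one (by omega)]
  refine Polynomial.funext fun x => ?_
  have h := bernoulli_eval_one_sub (p + 1) (x + 2⁻¹)
  rw [show 1 - (x + 2⁻¹) = -x + 2⁻¹ by ring] at h
  simp only [powerSumPoly, eval_comp, eval_mul, eval_sub, eval_C, eval_add, eval_neg, eval_X,
    eval_smul, smul_eq_mul, h]
  linear_combination -((p : ℚ) + 1)⁻¹ * hb

lemma coeff_powerSumPoly_eq_zero {p i : ℕ} (hp : p ≠ 0) (hi : Even (i + p)) :
    (powerSumPoly p).coeff i = 0 :=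
  coeff_eq_zero_of_comp_neg_X_eq_smul (powerSumPoly_comp_neg_X hp)
    (by rw [← add_assoc]; exact hi.add_one)

lemma sum_Icc_pow_eq_sum_range {p m : ℕ} (hp : p ≠ 0) (hpm : p ≤ 2 * m) (n : ℕ) :
    ∑ k ∈ Icc 1 n, (k : ℚ) ^ p = ∑ j ∈ range (m + 1),
      ((powerSumPoly p).coeff (2 * j) * ((n : ℚ) + 1 / 2) ^ (2 * j)
        + (powerSumPoly p).coeff (2 * j + 1) * ((n : ℚ) + 1 / 2) ^ (2 * j + 1)) := by
  rw [← powerSumPoly_eval hp,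
    eval_eq_sum_range_even_add_odd (m := m + 1) ((natDegree_powerSumPoly_le p).trans_lt (by omega))]

end Polynomial

theorem stmt_17 (m : ℕ) (hm : 1 ≤ m) :
    ∃ fodd feven : ℕ → ℚ,
      ∀ n : ℕ, 1 ≤ n →
        (∑ k ∈ Finset.Icc 1 n, (k : ℚ) ^ (2 * m - 1)
            = ∑ j ∈ Finset.range (m + 1), fodd j * ((n : ℚ) + 1 / 2) ^ (2 * j)) ∧
        (∑ k ∈ Finset.Icc 1 n, (k : ℚ) ^ (2 * m)
            = ∑ j ∈ Finset.range (m + 1), feven j * ((n : ℚ) + 1 / 2) ^ (2 * j + 1)) := by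
  refine ⟨fun j => (powerSumPoly (2 * m - 1)).coeff (2 * j),
    fun j => (powerSumPoly (2 * m)).coeff (2 * j + 1), fun n _ => ⟨?_, ?_⟩⟩
  · rw [sum_Icc_pow_eq_sum_range (m := m) (by omega) (by omega)]
    refine sum_congr rfl fun j _ => ?_
    rw [coeff_powerSumPoly_eq_zero (i := 2 * j + 1) (by omega) ⟨m + j, by omega⟩, zero_mul,
      add_zero]
  · rw [sum_Icc_pow_eq_sum_range (m := m) (by omega) le_rfl]
    refine sum_congr rfl fun j _ => ?_
    rw [coeff_powerSumPoly_eq_zero (i := 2 * j) (by omega) ⟨m + j, by omega⟩, zero_mul,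
      zero_add]
end
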